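/- The functions H = (1/4)z₁ + (1/4)z₂ + (1/2)(x₁x₂ + y₁y₂) and J = z₁ + 2z₂ on S² × S² Poisson-commute with respect to the Poisson structure ω ⊕ 2ω, where ω is the standard area form on the unit sphere; equivalently, in terms of the Poisson brackets {xᵢ, yᵢ} = cᵢ zᵢ, {yᵢ, zᵢ} = cᵢ xᵢ, {zᵢ, xᵢ} = cᵢ yᵢ with c₁ = 1, c₂ = 1/2 (and brackets between coordinates of different factors vanishing), one has {H, J} = 0. -/

import Mathlib

open Real

/-- The Hamiltonian H = (1/4)z₁ + (1/4)z₂ + (1/2)(x₁x₂ + y₁y₂) on S² × S². -/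
noncomputable def Ham (x₁ y₁ z₁ x₂ y₂ z₂ : ℝ) : ℝ :=
  (1/4) * z₁ + (1/4) * z₂ + (1/2) * (x₁ * x₂ + y₁ * y₂)

/-- The momentum J = z₁ + 2z₂ of the circle action on S² × S². -/
noncomputable def Mom (x₁ y₁ z₁ x₂ y₂ z₂ : ℝ) : ℝ := z₁ + 2 * z₂

/-!
The gradient of J is vertical on both factors, with weights 1 and 2 that exactly cancel the
factors c₁ = 1 and c₂ = 1/2 of the bracket. Hence J generates the simultaneous rotation of the
two spheres about the z-axis at unit speed, and {H, J} is the derivative of H along it: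
x₁ ∂H/∂y₁ - y₁ ∂H/∂x₁ + x₂ ∂H/∂y₂ - y₂ ∂H/∂x₂. This vanishes because H depends on the two
points only through z₁, z₂ and the rotation invariant x₁x₂ + y₁y₂.
-/

/-- H and J Poisson-commute: with the brackets {xᵢ,yᵢ} = cᵢzᵢ, {yᵢ,zᵢ} = cᵢxᵢ,
{zᵢ,xᵢ} = cᵢyᵢ (c₁ = 1, c₂ = 1/2, brackets between different factors vanishing),
the Poisson bracket {H, J}, expanded by bilinearity and Leibniz in terms of the
partial derivatives of H and J, vanishes at every point. -/
theorem Ham_Mom_poisson_commute (x₁ y₁ z₁ x₂ y₂ z₂ : ℝ) :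
    let c₁ : ℝ := 1
    let c₂ : ℝ := 1/2
    let Hx₁ := deriv (fun t => Ham t y₁ z₁ x₂ y₂ z₂) x₁
    let Hy₁ := deriv (fun t => Ham x₁ t z₁ x₂ y₂ z₂) y₁
    let Hz₁ := deriv (fun t => Ham x₁ y₁ t x₂ y₂ z₂) z₁
    let Hx₂ := deriv (fun t => Ham x₁ y₁ z₁ t y₂ z₂) x₂
    let Hy₂ := deriv (fun t => Ham x₁ y₁ z₁ x₂ t z₂) y₂
    let Hz₂ := deriv (fun t => Ham x₁ y₁ z₁ x₂ y₂ t) z₂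
    let Jx₁ := deriv (fun t => Mom t y₁ z₁ x₂ y₂ z₂) x₁
    let Jy₁ := deriv (fun t => Mom x₁ t z₁ x₂ y₂ z₂) y₁
    let Jz₁ := deriv (fun t => Mom x₁ y₁ t x₂ y₂ z₂) z₁
    let Jx₂ := deriv (fun t => Mom x₁ y₁ z₁ t y₂ z₂) x₂
    let Jy₂ := deriv (fun t => Mom x₁ y₁ z₁ x₂ t z₂) y₂
    let Jz₂ := deriv (fun t => Mom x₁ y₁ z₁ x₂ y₂ t) z₂
    c₁ * (z₁ * (Hx₁ * Jy₁ - Hy₁ * Jx₁) + x₁ * (Hy₁ * Jz₁ - Hz₁ * Jy₁)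
        + y₁ * (Hz₁ * Jx₁ - Hx₁ * Jz₁))
      + c₂ * (z₂ * (Hx₂ * Jy₂ - Hy₂ * Jx₂) + x₂ * (Hy₂ * Jz₂ - Hz₂ * Jy₂)
        + y₂ * (Hz₂ * Jx₂ - Hx₂ * Jz₂)) = 0 := by
  intro c₁ c₂ Hx₁ Hy₁ Hz₁ Hx₂ Hy₂ Hz₂ Jx₁ Jy₁ Jz₁ Jx₂ Jy₂ Jz₂
  obtain ⟨hJx₁, hJy₁, hJx₂, hJy₂⟩ : Jx₁ = 0 ∧ Jy₁ = 0 ∧ Jx₂ = 0 ∧ Jy₂ = 0 := by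
    simp [Jx₁, Jy₁, Jx₂, Jy₂, Mom]
  obtain ⟨hJz₁, hJz₂⟩ : Jz₁ = 1 ∧ Jz₂ = 2 := by
    simp [Jz₁, Jz₂, Mom]
  obtain ⟨hHx₁, hHy₁, hHx₂, hHy₂⟩ : Hx₁ = x₂ / 2 ∧ Hy₁ = y₂ / 2 ∧ Hx₂ = x₁ / 2 ∧ Hy₂ = y₁ / 2 := by
    simp [Hx₁, Hy₁, Hx₂, Hy₂, Ham, div_eq_inv_mul]
  have hH_rotation_invariant : x₁ * Hy₁ - y₁ * Hx₁ + (x₂ * Hy₂ - y₂ * Hx₂) = 0 := by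
    rw [hHx₁, hHy₁, hHx₂, hHy₂]
    ring
  rw [hJx₁, hJy₁, hJx₂, hJy₂, hJz₁, hJz₂]
  linear_combination hH_rotation_invariant
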